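/- arXiv:1307.5625 — 4 statements merged into one kernel-verified Lean document; each statement's English description precedes it below -/
import Mathlib

section
/- (Proposition 4.1, Isbell adjunction) Let φ : 𝔸 ⇸ 𝔹 be a Q-distributor. Then: (a) for every contravariant presheaf μ on 𝔸, φ↑(μ) is a covariant presheaf on 𝔹, and for every covariant presheaf λ on 𝔹, φ↓(λ) is a contravariant presheaf on 𝔸; (b) for all such μ and λ, ⨅_{y∈B} (λ(y) ↘ φ↑(μ)(y)) = ⨅_{x∈A} (φ↓(λ)(x) ↙ μ(x)), i.e. P†𝔹(φ↑(μ), λ) = P𝔸(μ, φ↓(λ)), so φ↑ is Q-enriched left adjoint to φ↓. -/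
open IsQuantale

variable {Q : Type*} [Monoid Q] [CompleteLattice Q] [IsQuantale Q]

/-- Left implication `x ↙ y`: the largest `z` with `z * y ≤ x`. -/
def lres (x y : Q) : Q := sSup {z | z * y ≤ x}

/-- Right implication `y ↘ x`: the largest `z` with `y * z ≤ x`. -/
def rres (y x : Q) : Q := sSup {z | y * z ≤ x}

/-- A Q-category structure on a type `A`. -/
structure IsQCat {A : Type*} (𝔸 : A → A → Q) : Prop where
  refl : ∀ x, 1 ≤ 𝔸 x x
  comp : ∀ x y z, 𝔸 y z * 𝔸 x y ≤ 𝔸 x z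

/-- A Q-distributor `φ : 𝔸 ⇸ 𝔹`. -/
structure IsQDist {A B : Type*} (𝔸 : A → A → Q) (𝔹 : B → B → Q) (φ : A → B → Q) : Prop where
  comp_left : ∀ x y y', 𝔹 y' y * φ x y' ≤ φ x y
  comp_right : ∀ x x' y, φ x' y * 𝔸 x x' ≤ φ x y

/-- A Q-functor `F : 𝔸 → 𝔹`. -/
def IsQFunctor {A B : Type*} (𝔸 : A → A → Q) (𝔹 : B → B → Q) (F : A → B) : Prop :=
  ∀ x x', 𝔸 x x' ≤ 𝔹 (F x) (F x')

/-- A contravariant presheaf on `𝔸`. -/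
def IsContraPsh {A : Type*} (𝔸 : A → A → Q) (μ : A → Q) : Prop :=
  ∀ x x', μ x' * 𝔸 x x' ≤ μ x

/-- A covariant presheaf on `𝔹`. -/
def IsCoPsh {B : Type*} (𝔹 : B → B → Q) (lam : B → Q) : Prop :=
  ∀ y y', 𝔹 y y' * lam y ≤ lam y'

/-- `φ↑(μ)(y) = ⨅ x, φ(x,y) ↙ μ(x)`. -/
def phiUp {A B : Type*} (φ : A → B → Q) (μ : A → Q) : B → Q :=
  fun y => ⨅ x, lres (φ x y) (μ x)

/-- `φ↓(λ)(x) = ⨅ y, λ(y) ↘ φ(x,y)`. -/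
def phiDown {A B : Type*} (φ : A → B → Q) (lam : B → Q) : A → Q :=
  fun x => ⨅ y, rres (lam y) (φ x y)

/-- `φ*(λ)(x) = ⨆ y, λ(y) * φ(x,y)`. -/
def phiStar {A B : Type*} (φ : A → B → Q) (lam : B → Q) : A → Q :=
  fun x => ⨆ y, lam y * φ x y

/-- `φ_*(μ)(y) = ⨅ x, μ(x) ↙ φ(x,y)`. -/
def phiLow {A B : Type*} (φ : A → B → Q) (μ : A → Q) : B → Q :=
  fun y => ⨅ x, lres (μ x) (φ x y)

/-- The underlying set of the Q-category `P𝔸` of contravariant presheaves. -/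
abbrev CPsh {A : Type*} (𝔸 : A → A → Q) := {μ : A → Q // ∀ x x', μ x' * 𝔸 x x' ≤ μ x}

/-- The underlying set of the Q-category `P†𝔹` of covariant presheaves. -/
abbrev CoPsh {B : Type*} (𝔹 : B → B → Q) := {lam : B → Q // ∀ y y', 𝔹 y y' * lam y ≤ lam y'}

/-- The Yoneda embedding `x ↦ 𝔸(·,x)`. -/
def yonedaP {A : Type*} {𝔸 : A → A → Q} (hA : IsQCat 𝔸) (x : A) : CPsh 𝔸 :=
  ⟨fun x' => 𝔸 x' x, fun a b => hA.comp a b x⟩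

theorem le_lres_iff {z x y : Q} : z ≤ lres x y ↔ z * y ≤ x :=
  Quantale.leftMulResiduation_le_iff_mul_le

theorem le_rres_iff {z x y : Q} : z ≤ rres y x ↔ y * z ≤ x :=
  Quantale.rightMulResiduation_le_iff_mul_le

theorem lres_mul_le {x y : Q} : lres x y * y ≤ x := le_lres_iff.mp le_rfl

theorem mul_rres_le {x y : Q} : y * rres y x ≤ x := le_rres_iff.mp le_rfl

theorem lres_iInf {ι : Sort*} (f : ι → Q) (b : Q) :
    lres (⨅ i, f i) b = ⨅ i, lres (f i) b := by
  apply le_antisymm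
  · exact le_iInf fun i => le_lres_iff.mpr (le_trans lres_mul_le (iInf_le _ i))
  · exact le_lres_iff.mpr (le_iInf fun i =>
      le_trans (mul_le_mul_left (iInf_le _ i) _) lres_mul_le)

theorem rres_iInf {ι : Sort*} (a : Q) (f : ι → Q) :
    rres a (⨅ i, f i) = ⨅ i, rres a (f i) := by
  apply le_antisymm
  · exact le_iInf fun i => le_rres_iff.mpr (le_trans mul_rres_le (iInf_le _ i))
  · exact le_rres_iff.mpr (le_iInf fun i =>
      le_trans (mul_le_mul_right (iInf_le _ i) _) mul_rres_le)

theorem rres_lres_comm (a b c : Q) : rres a (lres c b) = lres (rres a c) b := by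
  apply le_antisymm
  · rw [le_lres_iff, le_rres_iff, ← mul_assoc]
    exact le_trans (mul_le_mul_left mul_rres_le b) lres_mul_le
  · rw [le_rres_iff, le_lres_iff, mul_assoc]
    exact le_trans (mul_le_mul_right lres_mul_le a) mul_rres_le

/-- Proposition 4.1: the Isbell adjunction `φ↑ ⊣ φ↓` induced by a Q-distributor. -/
theorem isbell_adjunction {A B : Type*} {𝔸 : A → A → Q} {𝔹 : B → B → Q}
    (hA : IsQCat 𝔸) (hB : IsQCat 𝔹) (φ : A → B → Q) (hφ : IsQDist 𝔸 𝔹 φ) :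
    (∀ μ : A → Q, IsContraPsh 𝔸 μ → IsCoPsh 𝔹 (phiUp φ μ)) ∧
    (∀ lam : B → Q, IsCoPsh 𝔹 lam → IsContraPsh 𝔸 (phiDown φ lam)) ∧
    (∀ (μ : A → Q) (lam : B → Q), IsContraPsh 𝔸 μ → IsCoPsh 𝔹 lam →
      (⨅ y, rres (lam y) (phiUp φ μ y)) = ⨅ x, lres (phiDown φ lam x) (μ x)) := by
  refine ⟨?_, ?_, ?_⟩
  · intro μ _ y y'
    refine le_iInf fun x => le_lres_iff.mpr ?_
    calc 𝔹 y y' * phiUp φ μ y * μ x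
        ≤ 𝔹 y y' * lres (φ x y) (μ x) * μ x :=
          mul_le_mul_left (mul_le_mul_right (iInf_le _ x) _) _
      _ = 𝔹 y y' * (lres (φ x y) (μ x) * μ x) := mul_assoc _ _ _
      _ ≤ 𝔹 y y' * φ x y := mul_le_mul_right lres_mul_le _
      _ ≤ φ x y' := hφ.comp_left x y' y
  · intro lam _ x x'
    refine le_iInf fun y => le_rres_iff.mpr ?_
    calc lam y * (phiDown φ lam x' * 𝔸 x x')
        = lam y * phiDown φ lam x' * 𝔸 x x' := (mul_assoc _ _ _).symm
      _ ≤ lam y * rres (lam y) (φ x' y) * 𝔸 x x' :=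
          mul_le_mul_left (mul_le_mul_right (iInf_le _ y) _) _
      _ ≤ φ x' y * 𝔸 x x' := mul_le_mul_left mul_rres_le _
      _ ≤ φ x y := hφ.comp_right x x' y
  · intro μ lam _ _
    calc (⨅ y, rres (lam y) (phiUp φ μ y))
        = ⨅ y, ⨅ x, rres (lam y) (lres (φ x y) (μ x)) :=
          iInf_congr fun y => rres_iInf _ _
      _ = ⨅ x, ⨅ y, lres (rres (lam y) (φ x y)) (μ x) := by
          rw [iInf_comm]
          exact iInf_congr fun x => iInf_congr fun y => rres_lres_comm _ _ _
      _ = ⨅ x, lres (phiDown φ lam x) (μ x) :=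
          iInf_congr fun x => (lres_iInf _ _).symm
end

section
/- (Theorem 4.17, specialised to the two-element quantaloid, i.e. formal concept lattices) Let A and B be types, r : A → B → Prop a relation, and X a complete lattice. Then X is order-isomorphic to the concept lattice Concept A B r if and only if there exist maps f : A → X and g : B → X such that: (i) f is sup-dense, i.e. for every x ∈ X there is a set S ⊆ Set.range f with x = sSup S; (ii) g is inf-dense, i.e. for every x ∈ X there is a set T ⊆ Set.range g with x = sInf T; and (iii) for all a ∈ A and b ∈ B, r a b ↔ f a ≤ g b. -/
open Set

section Aux

variable {A B : Type*} (r : A → B → Prop)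

/-- The object concept generated by `a : A`. -/
def objectConcept (a : A) : Concept A B r :=
  ⟨lowerPolar r (upperPolar r {a}), upperPolar r {a},
    upperPolar_lowerPolar_upperPolar r _, rfl⟩

/-- The attribute concept generated by `b : B`. -/
def attributeConcept (b : B) : Concept A B r :=
  ⟨lowerPolar r {b}, upperPolar r (lowerPolar r {b}),
    rfl, lowerPolar_upperPolar_lowerPolar r _⟩

variable {r}

lemma objectConcept_le_iff {a : A} {c : Concept A B r} :
    objectConcept r a ≤ c ↔ a ∈ c.extent := by
  constructor
  · intro h
    exact h (subset_lowerPolar_upperPolar r {a} rfl)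
  · intro ha
    show lowerPolar r (upperPolar r {a}) ⊆ c.extent
    rw [← c.lowerPolar_intent]
    refine lowerPolar_anti r ?_
    intro b hb a' ha'
    rw [mem_singleton_iff] at ha'
    subst ha'
    rw [← c.lowerPolar_intent] at ha
    exact ha hb

lemma mem_attributeConcept_fst {a : A} {b : B} :
    a ∈ (attributeConcept r b).extent ↔ r a b := by
  constructor
  · intro h; exact h rfl
  · intro h b' hb'; rw [mem_singleton_iff] at hb'; subst hb'; exact h

lemma rel_iff_objectConcept_le_attributeConcept {a : A} {b : B} :
    r a b ↔ objectConcept r a ≤ attributeConcept r b := by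
  rw [objectConcept_le_iff, mem_attributeConcept_fst]

lemma concept_eq_sSup_objectConcept (c : Concept A B r) :
    c = sSup (objectConcept r '' c.extent) := by
  apply le_antisymm
  · rw [← Concept.intent_subset_intent_iff]
    intro b hb
    simp only [Concept.intent_sSup, mem_iInter] at hb
    rw [← c.upperPolar_extent]
    intro a ha
    have := hb (objectConcept r a) ⟨a, ha, rfl⟩
    exact this rfl
  · apply sSup_le
    rintro d ⟨a, ha, rfl⟩
    exact objectConcept_le_iff.2 ha

lemma concept_eq_sInf_attributeConcept (c : Concept A B r) :
    c = sInf (attributeConcept r '' c.intent) := by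
  apply le_antisymm
  · apply le_sInf
    rintro d ⟨b, hb, rfl⟩
    intro a ha b' hb'
    rw [mem_singleton_iff] at hb'
    subst hb'
    rw [← c.upperPolar_extent] at hb
    exact hb ha
  · intro a ha
    simp only [Concept.extent_sInf, mem_iInter] at ha
    show a ∈ c.extent
    rw [← c.lowerPolar_intent]
    intro b hb
    exact ha (attributeConcept r b) ⟨b, hb, rfl⟩ rfl

end Aux

/-- Theorem 4.17 specialised to the two-element quantaloid: a complete lattice is
order-isomorphic to the concept lattice of a relation `r : A → B → Prop` iff it admits
a sup-dense map from `A` and an inf-dense map from `B` representing `r`. -/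
theorem orderIso_concept_iff {A B : Type*} (r : A → B → Prop)
    (X : Type*) [CompleteLattice X] :
    Nonempty (X ≃o Concept A B r) ↔
      ∃ (f : A → X) (g : B → X),
        (∀ x : X, ∃ S : Set X, S ⊆ Set.range f ∧ x = sSup S) ∧
        (∀ x : X, ∃ T : Set X, T ⊆ Set.range g ∧ x = sInf T) ∧
        (∀ (a : A) (b : B), r a b ↔ f a ≤ g b) := by
  constructor
  · rintro ⟨e⟩
    refine ⟨fun a => e.symm (objectConcept r a), fun b => e.symm (attributeConcept r b),
      ?_, ?_, ?_⟩
    · intro x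
      refine ⟨e.symm '' (objectConcept r '' (e x).extent), ?_, ?_⟩
      · rintro _ ⟨_, ⟨a, _, rfl⟩, rfl⟩
        exact ⟨a, rfl⟩
      · calc x = e.symm (e x) := (e.symm_apply_apply x).symm
          _ = e.symm (sSup (objectConcept r '' (e x).extent)) := by
              rw [← concept_eq_sSup_objectConcept]
          _ = ⨆ c ∈ objectConcept r '' (e x).extent, e.symm c := e.symm.map_sSup _
          _ = sSup (e.symm '' (objectConcept r '' (e x).extent)) := sSup_image.symm
    · intro x
      refine ⟨e.symm '' (attributeConcept r '' (e x).intent), ?_, ?_⟩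
      · rintro _ ⟨_, ⟨b, _, rfl⟩, rfl⟩
        exact ⟨b, rfl⟩
      · calc x = e.symm (e x) := (e.symm_apply_apply x).symm
          _ = e.symm (sInf (attributeConcept r '' (e x).intent)) := by
              rw [← concept_eq_sInf_attributeConcept]
          _ = ⨅ c ∈ attributeConcept r '' (e x).intent, e.symm c := e.symm.map_sInf _
          _ = sInf (e.symm '' (attributeConcept r '' (e x).intent)) := sInf_image.symm
    · intro a b
      exact rel_iff_objectConcept_le_attributeConcept.trans e.symm.le_iff_le.symm
  · rintro ⟨f, g, hf, hg, hr⟩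
    -- key density lemmas
    have lemA : ∀ (x : X) (b : B), x ≤ g b ↔ ∀ a, f a ≤ x → f a ≤ g b := by
      intro x b
      constructor
      · intro h a ha; exact ha.trans h
      · intro h
        obtain ⟨S, hS, rfl⟩ := hf x
        apply sSup_le
        intro s hs
        obtain ⟨a, rfl⟩ := hS hs
        exact h a (le_sSup hs)
    have lemB : ∀ (x : X) (a : A), f a ≤ x ↔ ∀ b, x ≤ g b → f a ≤ g b := by
      intro x a
      constructor
      · intro h b hb; exact h.trans hb
      · intro h
        obtain ⟨T, hT, rfl⟩ := hg x
        apply le_sInf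
        intro t ht
        obtain ⟨b, rfl⟩ := hT ht
        exact h b (sInf_le ht)
    refine ⟨⟨⟨fun x => ⟨{a | f a ≤ x}, {b | x ≤ g b}, ?_, ?_⟩,
      fun c => sSup (f '' c.extent), ?_, ?_⟩, ?_⟩⟩
    · -- upperPolar_extent
      ext b
      show (∀ ⦃a⦄, f a ≤ x → r a b) ↔ x ≤ g b
      rw [lemA]
      exact ⟨fun h a ha => (hr a b).1 (h ha), fun h a ha => (hr a b).2 (h a ha)⟩
    · -- lowerPolar_intent
      ext a
      show (∀ ⦃b⦄, x ≤ g b → r a b) ↔ f a ≤ x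
      rw [lemB]
      exact ⟨fun h b hb => (hr a b).1 (h hb), fun h b hb => (hr a b).2 (h b hb)⟩
    · -- left_inv
      intro x
      apply le_antisymm
      · apply sSup_le
        rintro _ ⟨a, ha, rfl⟩
        exact ha
      · obtain ⟨S, hS, hx⟩ := hf x
        rw [hx]
        apply sSup_le_sSup
        intro s hs
        obtain ⟨a, rfl⟩ := hS hs
        exact ⟨a, le_sSup hs, rfl⟩
    · -- right_inv
      intro c
      apply Concept.ext
      ext a
      show f a ≤ sSup (f '' c.extent) ↔ a ∈ c.extent
      constructor
      · intro h
        rw [← c.lowerPolar_intent]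
        intro b hb
        rw [hr a b]
        refine h.trans (sSup_le ?_)
        rintro _ ⟨a', ha', rfl⟩
        rw [← c.upperPolar_extent] at hb
        exact (hr a' b).1 (hb ha')
      · intro ha
        exact le_sSup ⟨a, ha, rfl⟩
    · -- map_rel_iff'
      intro x y
      show {a | f a ≤ x} ⊆ {a | f a ≤ y} ↔ x ≤ y
      constructor
      · intro h
        obtain ⟨S, hS, rfl⟩ := hf x
        apply sSup_le
        intro s hs
        obtain ⟨a, rfl⟩ := hS hs
        exact h (le_sSup hs)
      · intro h a ha
        exact le_trans ha h
end

section
/- (Theorem 5.4, Kan adjunctions of a Q-functor) Let F : 𝔸 → 𝔹 be a Q-functor. Then for every contravariant presheaf λ on 𝔹 and every x ∈ A: ⨆_{y∈B} (λ(y) * 𝔹(Fx,y)) = λ(Fx) = ⨅_{y∈B} (λ(y) ↙ 𝔹(y,Fx)). That is, (F_♮)*(λ) = F^←(λ) = (F♮)_*(λ), so the functor F^← (λ ↦ λ∘F) coincides with both the right Kan adjoint of the cograph F♮ and the left Kan adjoint of the graph F_♮. -/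
open IsQuantale

variable {Q : Type*} [Monoid Q] [CompleteLattice Q] [IsQuantale Q]

/-- Theorem 5.4: for a Q-functor `F`, `(F_♮)* = F^← = (F♮)_*`. -/
theorem kan_adjoints_of_functor {A B : Type*} {𝔸 : A → A → Q} {𝔹 : B → B → Q}
    (hA : IsQCat 𝔸) (hB : IsQCat 𝔹) (F : A → B) (hF : IsQFunctor 𝔸 𝔹 F) :
    ∀ lam : B → Q, IsContraPsh 𝔹 lam → ∀ x : A,
      (⨆ y, lam y * 𝔹 (F x) y) = lam (F x) ∧
      lam (F x) = ⨅ y, lres (lam y) (𝔹 y (F x)) := by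
  intro lam hlam x
  constructor
  · apply le_antisymm
    · exact iSup_le fun y => hlam _ y
    · calc lam (F x) = lam (F x) * 1 := (mul_one _).symm
        _ ≤ lam (F x) * 𝔹 (F x) (F x) := by
            exact mul_le_mul_right (hB.refl (F x)) _
        _ ≤ ⨆ y, lam y * 𝔹 (F x) y := le_iSup (fun y => lam y * 𝔹 (F x) y) (F x)
  · apply le_antisymm
    · refine le_iInf fun y => le_sSup ?_
      exact hlam y (F x)
    · calc (⨅ y, lres (lam y) (𝔹 y (F x))) ≤ lres (lam (F x)) (𝔹 (F x) (F x)) :=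
          iInf_le _ (F x)
        _ ≤ lam (F x) := by
            apply sSup_le
            intro z hz
            calc z = z * 1 := (mul_one z).symm
              _ ≤ z * 𝔹 (F x) (F x) := mul_le_mul_right (hB.refl (F x)) z
              _ ≤ lam (F x) := hz
end

section
/- (Lemma 5.12, Girard case) Let Q be a unital quantale and d ∈ Q a cyclic dualizing element, i.e. d ↙ f = f ↘ d for all f ∈ Q, and (d ↙ f) ↘ d = f = d ↙ (f ↘ d) for all f ∈ Q; write ¬f = d ↙ f. Let φ : 𝔸 ⇸ 𝔹 be a Q-distributor. Then φ* = ¬∘(¬φ)↑ and φ_* = (¬φ)↓∘¬: for every contravariant presheaf λ on 𝔹, every contravariant presheaf μ on 𝔸, every x ∈ A and y ∈ B, ⨆_{y'∈B} (λ(y') * φ(x,y')) = ¬( ⨅_{y'∈B} (¬φ(x,y') ↙ λ(y')) ) and ⨅_{x'∈A} (μ(x') ↙ φ(x',y)) = ⨅_{x'∈A} (¬μ(x') ↘ ¬φ(x',y)). -/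
open IsQuantale

variable {Q : Type*} [Monoid Q] [CompleteLattice Q] [IsQuantale Q]

lemma le_lres {x y z : Q} : z ≤ lres x y ↔ z * y ≤ x := by
  constructor
  · intro h
    calc z * y ≤ lres x y * y := mul_le_mul_left h _
    _ = ⨆ w ∈ {z : Q | z * y ≤ x}, w * y := sSup_mul_distrib
    _ ≤ x := by exact iSup₂_le fun w hw => hw
  · intro h; exact le_sSup h

lemma le_rres {x y z : Q} : z ≤ rres y x ↔ y * z ≤ x := by
  constructor
  · intro h
    calc y * z ≤ y * rres y x := mul_le_mul_right h _
    _ = ⨆ w ∈ {z : Q | y * z ≤ x}, y * w := mul_sSup_distrib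
    _ ≤ x := by exact iSup₂_le fun w hw => hw
  · intro h; exact le_sSup h

lemma lres_anti {d a b : Q} (h : a ≤ b) : lres d b ≤ lres d a :=
  le_lres.mpr (le_trans (mul_le_mul_right h _) (le_lres.mp le_rfl))

lemma neg_neg_of (d : Q) (hcyc : ∀ f : Q, lres d f = rres f d)
    (hdual : ∀ f : Q, rres (lres d f) d = f ∧ lres d (rres f d) = f) (f : Q) :
    lres d (lres d f) = f := by
  rw [hcyc (lres d f)]; exact (hdual f).1

lemma lres_lres (d a b : Q) : lres (lres d a) b = lres d (b * a) := by
  apply le_antisymm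
  · exact le_lres.mpr (by rw [← mul_assoc]; exact le_lres.mp (le_lres.mp le_rfl))
  · refine le_lres.mpr (le_lres.mpr ?_)
    rw [mul_assoc]; exact le_lres.mp le_rfl

lemma neg_iInf (d : Q) (hcyc : ∀ f : Q, lres d f = rres f d)
    (hdual : ∀ f : Q, rres (lres d f) d = f ∧ lres d (rres f d) = f)
    {ι : Sort*} (g : ι → Q) : lres d (⨅ i, g i) = ⨆ i, lres d (g i) := by
  apply le_antisymm
  · have : lres d (⨆ i, lres d (g i)) ≤ ⨅ i, g i := by
      refine le_iInf fun i => ?_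
      have := lres_anti (d := d) (le_iSup (fun i => lres d (g i)) i)
      rwa [neg_neg_of d hcyc hdual] at this
    have := lres_anti (d := d) this
    rwa [neg_neg_of d hcyc hdual] at this
  · exact iSup_le fun i => lres_anti (iInf_le g i)

/-- Lemma 5.12 (Girard case): if `d` is a cyclic dualizing element, then
`φ* = ¬ ∘ (¬φ)↑` and `φ_* = (¬φ)↓ ∘ ¬`. -/
theorem girard_kan_from_isbell (d : Q)
    (hcyc : ∀ f : Q, lres d f = rres f d)
    (hdual : ∀ f : Q, rres (lres d f) d = f ∧ lres d (rres f d) = f)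
    {A B : Type*} {𝔸 : A → A → Q} {𝔹 : B → B → Q}
    (hA : IsQCat 𝔸) (hB : IsQCat 𝔹) (φ : A → B → Q) (hφ : IsQDist 𝔸 𝔹 φ) :
    ∀ lam : B → Q, IsContraPsh 𝔹 lam → ∀ μ : A → Q, IsContraPsh 𝔸 μ →
      ∀ (x : A) (y : B),
        (⨆ y', lam y' * φ x y') = lres d (⨅ y', lres (lres d (φ x y')) (lam y')) ∧
        (⨅ x', lres (μ x') (φ x' y)) = ⨅ x', rres (lres d (μ x')) (lres d (φ x' y)) := by
  intro lam _ μ _ x y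
  constructor
  · have h1 : ∀ y', lres (lres d (φ x y')) (lam y') = lres d (lam y' * φ x y') := by
      intro y'; exact lres_lres d (φ x y') (lam y')
    simp only [h1]
    rw [neg_iInf d hcyc hdual]
    simp only [neg_neg_of d hcyc hdual]
  · refine iInf_congr fun x' => le_antisymm ?_ ?_
    · refine le_rres.mpr (le_lres.mpr ?_)
      rw [mul_assoc]
      have h2 : lres (μ x') (φ x' y) * φ x' y ≤ μ x' := le_lres.mp le_rfl
      calc lres d (μ x') * (lres (μ x') (φ x' y) * φ x' y) ≤ lres d (μ x') * μ x' :=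
            mul_le_mul_right h2 _
        _ ≤ d := le_lres.mp le_rfl
    · refine le_lres.mpr ?_
      have h3 : lres d (μ x') * (rres (lres d (μ x')) (lres d (φ x' y)) * φ x' y) ≤ d := by
        rw [← mul_assoc]
        calc lres d (μ x') * rres (lres d (μ x')) (lres d (φ x' y)) * φ x' y
            ≤ lres d (φ x' y) * φ x' y := mul_le_mul_left (le_rres.mp le_rfl) _
          _ ≤ d := le_lres.mp le_rfl
      have h4 : rres (lres d (μ x')) (lres d (φ x' y)) * φ x' y ≤ rres (lres d (μ x')) d :=
        le_rres.mpr h3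
      rw [← hcyc (lres d (μ x')), neg_neg_of d hcyc hdual] at h4
      exact h4
end
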